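/- arXiv:1904.02276 — 3 statements merged into one kernel-verified Lean document; each statement's English description precedes it below -/
import Mathlib

section
/- Let $n \ge 1$, $T \ge 1$, $\eta > 0$, and let $v_1,\dots,v_T \in \mathbb{R}^n$ satisfy $|v_t(i)| \le 1/\eta$ for all $t \in \{1,\dots,T\}$ and $i \in \{1,\dots,n\}$. Define $u_1 = (1,\dots,1) \in \mathbb{R}^n$, and for each $t$ set $u_{t+1}(i) = u_t(i)\,(1 - \eta v_t(i) + \eta^2 v_t(i)^2)$ and $p_t = u_t/\|u_t\|_1$. Then $\sum_{t=1}^{T} \langle p_t, v_t \rangle \le \min_{i \in \{1,\dots,n\}} \sum_{t=1}^{T} v_t(i) + \eta \sum_{t=1}^{T} \sum_{i=1}^{n} p_t(i)\, v_t(i)^2 + \frac{\ln n}{\eta}$. -/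
lemma exp_neg_le_quad {x : ℝ} (hx : |x| ≤ 1) : Real.exp (-x) ≤ 1 - x + x ^ 2 := by
  have h := Real.exp_bound (x := -x) (by rwa [abs_neg]) (n := 2) (by norm_num)
  simp [Finset.sum_range_succ] at h
  have := abs_le.mp h
  nlinarith [sq_abs x, abs_nonneg x]

/-- Regret bound for the multiplicative weight method with the quadratic
weight update `f(x) = 1 - x + x²`. -/
theorem mw_quadratic_regret_bound (n T : ℕ) (hn : 1 ≤ n) (hT : 1 ≤ T)
    (η : ℝ) (hη : 0 < η)
    (v : ℕ → Fin n → ℝ)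
    (hv : ∀ t ∈ Finset.Icc 1 T, ∀ i : Fin n, |v t i| ≤ 1 / η)
    (u : ℕ → Fin n → ℝ)
    (hu1 : ∀ i : Fin n, u 1 i = 1)
    (hu : ∀ t ∈ Finset.Icc 1 T, ∀ i : Fin n,
      u (t + 1) i = u t i * (1 - η * v t i + η ^ 2 * (v t i) ^ 2))
    (p : ℕ → Fin n → ℝ)
    (hp : ∀ t ∈ Finset.Icc 1 T, ∀ i : Fin n, p t i = u t i / ∑ j, |u t j|) :
    (∑ t ∈ Finset.Icc 1 T, ∑ i, p t i * v t i)
      ≤ (Finset.univ.inf' ⟨⟨0, hn⟩, Finset.mem_univ _⟩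
            fun i : Fin n => ∑ t ∈ Finset.Icc 1 T, v t i)
        + η * (∑ t ∈ Finset.Icc 1 T, ∑ i, p t i * (v t i) ^ 2)
        + Real.log n / η := by
  -- positivity of the update factor
  have hfac : ∀ (t : ℕ) (i : Fin n),
      (0:ℝ) < 1 - η * v t i + η ^ 2 * (v t i) ^ 2 := by
    intro t i
    nlinarith [sq_nonneg (η * v t i - 1/2)]
  -- positivity of the weights
  have hupos : ∀ t, 1 ≤ t → t ≤ T + 1 → ∀ i, 0 < u t i := by
    intro t
    induction t with
    | zero => omega
    | succ k ih =>
      intro _ hk2 i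
      rcases Nat.eq_zero_or_pos k with hk0 | hk1
      · subst hk0; rw [hu1 i]; norm_num
      · have hkT : k ∈ Finset.Icc 1 T := Finset.mem_Icc.mpr ⟨hk1, by omega⟩
        rw [hu k hkT i]
        exact mul_pos (ih hk1 (by omega) i) (hfac k i)
  set Φ : ℕ → ℝ := fun t => ∑ i, u t i with hΦdef
  have hΦpos : ∀ t, 1 ≤ t → t ≤ T + 1 → 0 < Φ t := by
    intro t h1 h2
    exact Finset.sum_pos (fun i _ => hupos t h1 h2 i)
      ⟨⟨0, hn⟩, Finset.mem_univ _⟩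
  have habs : ∀ t, 1 ≤ t → t ≤ T + 1 → (∑ j, |u t j|) = Φ t := by
    intro t h1 h2
    exact Finset.sum_congr rfl fun j _ => abs_of_pos (hupos t h1 h2 j)
  have hp' : ∀ t ∈ Finset.Icc 1 T, ∀ i, p t i = u t i / Φ t := by
    intro t ht i
    rw [hp t ht i, habs t (Finset.mem_Icc.mp ht).1 (by
      have := (Finset.mem_Icc.mp ht).2; omega)]
  set A : ℕ → ℝ := fun t => ∑ i, p t i * v t i with hA
  set B : ℕ → ℝ := fun t => ∑ i, p t i * (v t i) ^ 2 with hB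
  -- one-step recursion for Φ
  have hstep : ∀ t ∈ Finset.Icc 1 T,
      Φ (t + 1) = Φ t * (1 - η * A t + η ^ 2 * B t) := by
    intro t ht
    obtain ⟨ht1, ht2⟩ := Finset.mem_Icc.mp ht
    have hΦt : Φ t ≠ 0 := ne_of_gt (hΦpos t ht1 (by omega))
    have hApv : Φ t * A t = ∑ i, u t i * v t i := by
      rw [hA, Finset.mul_sum]
      refine Finset.sum_congr rfl fun i _ => ?_
      rw [hp' t ht i]; field_simp
    have hBpv : Φ t * B t = ∑ i, u t i * (v t i) ^ 2 := by
      rw [hB, Finset.mul_sum]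
      refine Finset.sum_congr rfl fun i _ => ?_
      rw [hp' t ht i]; field_simp
    have : Φ (t + 1) = ∑ i, u t i * (1 - η * v t i + η ^ 2 * (v t i) ^ 2) :=
      Finset.sum_congr rfl fun i _ => hu t ht i
    rw [this]
    have expand : ∀ i : Fin n, u t i * (1 - η * v t i + η ^ 2 * (v t i) ^ 2)
        = u t i - η * (u t i * v t i) + η ^ 2 * (u t i * (v t i) ^ 2) := by
      intro i; ring
    rw [Finset.sum_congr rfl fun i _ => expand i]
    rw [Finset.sum_add_distrib, Finset.sum_sub_distrib, ← Finset.mul_sum,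
      ← Finset.mul_sum, ← hApv, ← hBpv]
    ring
  -- upper bound on Φ (k+1)
  have hub : ∀ k, k ≤ T →
      Φ (k + 1) ≤ n * Real.exp (∑ t ∈ Finset.Icc 1 k, (-(η * A t) + η ^ 2 * B t)) := by
    intro k
    induction k with
    | zero =>
      intro _
      simp [hΦdef, hu1, Finset.card_univ]
    | succ k ih =>
      intro hk
      have hmem : k + 1 ∈ Finset.Icc 1 T := Finset.mem_Icc.mpr ⟨by omega, hk⟩
      have h1 : Φ (k + 1 + 1) ≤ Φ (k + 1) * Real.exp (-(η * A (k+1)) + η ^ 2 * B (k+1)) := by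
        rw [hstep (k+1) hmem]
        have h2 : 1 - η * A (k+1) + η ^ 2 * B (k+1)
            ≤ Real.exp (-(η * A (k+1)) + η ^ 2 * B (k+1)) := by
          have := Real.add_one_le_exp (-(η * A (k+1)) + η ^ 2 * B (k+1))
          linarith
        exact mul_le_mul_of_nonneg_left h2 (le_of_lt (hΦpos (k+1) (by omega) (by omega)))
      have h3 : Φ (k + 1) * Real.exp (-(η * A (k+1)) + η ^ 2 * B (k+1))
          ≤ n * Real.exp (∑ t ∈ Finset.Icc 1 k, (-(η * A t) + η ^ 2 * B t))
            * Real.exp (-(η * A (k+1)) + η ^ 2 * B (k+1)) :=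
        mul_le_mul_of_nonneg_right (ih (by omega)) (Real.exp_pos _).le
      calc Φ (k + 1 + 1) ≤ _ := h1
        _ ≤ _ := h3
        _ = n * Real.exp (∑ t ∈ Finset.Icc 1 (k+1), (-(η * A t) + η ^ 2 * B t)) := by
            rw [Finset.sum_Icc_succ_top (by omega : 1 ≤ k + 1), mul_assoc, ← Real.exp_add]
  -- lower bound on u (k+1) i
  have hlb : ∀ k, k ≤ T → ∀ i,
      Real.exp (-(η * ∑ t ∈ Finset.Icc 1 k, v t i)) ≤ u (k + 1) i := by
    intro k
    induction k with
    | zero => intro _ i; simp [hu1 i]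
    | succ k ih =>
      intro hk i
      have hmem : k + 1 ∈ Finset.Icc 1 T := Finset.mem_Icc.mpr ⟨by omega, hk⟩
      have hx : |η * v (k+1) i| ≤ 1 := by
        have := hv (k+1) hmem i
        rw [abs_mul, abs_of_pos hη]
        calc η * |v (k+1) i| ≤ η * (1/η) := by
              exact mul_le_mul_of_nonneg_left this hη.le
          _ = 1 := by field_simp
      have hq := exp_neg_le_quad hx
      rw [hu (k+1) hmem i]
      have h1 : Real.exp (-(η * v (k+1) i))
          ≤ 1 - η * v (k+1) i + η ^ 2 * (v (k+1) i) ^ 2 := by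
        have : η ^ 2 * (v (k+1) i) ^ 2 = (η * v (k+1) i) ^ 2 := by ring
        rw [this]; exact hq
      calc Real.exp (-(η * ∑ t ∈ Finset.Icc 1 (k+1), v t i))
          = Real.exp (-(η * ∑ t ∈ Finset.Icc 1 k, v t i))
            * Real.exp (-(η * v (k+1) i)) := by
            rw [← Real.exp_add, Finset.sum_Icc_succ_top (by omega)]; ring_nf
        _ ≤ u (k+1) i * (1 - η * v (k+1) i + η ^ 2 * (v (k+1) i) ^ 2) := by
            apply mul_le_mul (ih (by omega) i) h1 (Real.exp_pos _).le
              (hupos (k+1) (by omega) (by omega) i).le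
  -- combine: key bound for every i
  have hkey : ∀ i : Fin n,
      (∑ t ∈ Finset.Icc 1 T, A t)
        ≤ (∑ t ∈ Finset.Icc 1 T, v t i)
          + η * (∑ t ∈ Finset.Icc 1 T, B t) + Real.log n / η := by
    intro i
    have h1 : Real.exp (-(η * ∑ t ∈ Finset.Icc 1 T, v t i)) ≤ u (T + 1) i :=
      hlb T le_rfl i
    have h2 : u (T + 1) i ≤ Φ (T + 1) :=
      Finset.single_le_sum (f := fun j => u (T+1) j)
        (fun j _ => (hupos (T+1) (by omega) le_rfl j).le) (Finset.mem_univ i)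
    have h3 := hub T le_rfl
    have hn' : (0:ℝ) < n := by exact_mod_cast hn
    have h4 : Real.exp (-(η * ∑ t ∈ Finset.Icc 1 T, v t i))
        ≤ Real.exp (Real.log n + ∑ t ∈ Finset.Icc 1 T, (-(η * A t) + η ^ 2 * B t)) := by
      rw [Real.exp_add, Real.exp_log hn']
      linarith
    have h5 := Real.exp_le_exp.mp h4
    rw [Finset.sum_add_distrib] at h5
    have hSA : ∑ x ∈ Finset.Icc 1 T, -(η * A x)
        = -(η * ∑ x ∈ Finset.Icc 1 T, A x) := by
      simp [Finset.mul_sum]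
    have hSB : ∑ x ∈ Finset.Icc 1 T, η ^ 2 * B x
        = η ^ 2 * ∑ x ∈ Finset.Icc 1 T, B x := by
      rw [Finset.mul_sum]
    rw [hSA, hSB] at h5
    -- h5 : -(η * Sv) ≤ log n + (-(η * ∑A) + η * (η * ∑B))
    have h6 : ((∑ t ∈ Finset.Icc 1 T, A t)
        - ((∑ t ∈ Finset.Icc 1 T, v t i) + η * ∑ t ∈ Finset.Icc 1 T, B t)) * η
        ≤ Real.log n := by nlinarith
    have h7 := (le_div_iff₀ hη).mpr h6
    linarith
  obtain ⟨i₀, -, hi₀⟩ := Finset.exists_mem_eq_inf' (s := (Finset.univ : Finset (Fin n)))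
    ⟨⟨0, hn⟩, Finset.mem_univ _⟩ (fun i : Fin n => ∑ t ∈ Finset.Icc 1 T, v t i)
  rw [hi₀]
  exact hkey i₀
end

section
/- Let $n \ge 2$, $d \ge 2$, $l \in \{2,\dots,d\}$, and let $X \in \mathbb{R}^{n \times d}$ be the Case-2 matrix with rows $X_1 = -\tfrac{1}{\sqrt{2}} e_1 + \tfrac{1}{\sqrt{2}} e_l$ and $X_i = \tfrac{1}{\sqrt{2}} e_1 + \tfrac{1}{\sqrt{2}} e_l$ for all $i \in \{2,\dots,n\}$. Then $\sup_{w \in \mathbb{B}_d} \min_{i \in \{1,\dots,n\}} \langle X_i, w \rangle = \tfrac{1}{\sqrt{2}}$, and the supremum is attained at $w = e_l$. -/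
/-- The maximin value of the Case-2 instance in the quantum lower bound for
linear classification is `1/√2`, attained at `w = e_l`. -/
theorem case2_linear_classification_value (n d : ℕ) (hn : 2 ≤ n) (hd : 2 ≤ d)
    (l : Fin d) (hl : (l : ℕ) ≠ 0)
    (X : Fin n → EuclideanSpace ℝ (Fin d))
    (hX1 : ∀ i : Fin n, (i : ℕ) = 0 →
      X i = -((Real.sqrt 2)⁻¹ • EuclideanSpace.single (⟨0, by omega⟩ : Fin d) (1 : ℝ))
        + (Real.sqrt 2)⁻¹ • EuclideanSpace.single l (1 : ℝ))
    (hXi : ∀ i : Fin n, (i : ℕ) ≠ 0 →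
      X i = (Real.sqrt 2)⁻¹ • EuclideanSpace.single (⟨0, by omega⟩ : Fin d) (1 : ℝ)
        + (Real.sqrt 2)⁻¹ • EuclideanSpace.single l (1 : ℝ)) :
    (⨅ i : Fin n, (inner ℝ (X i) (EuclideanSpace.single l (1 : ℝ)) : ℝ))
        = (Real.sqrt 2)⁻¹
      ∧ ∀ w : EuclideanSpace ℝ (Fin d), ‖w‖ ≤ 1 →
        (⨅ i : Fin n, (inner ℝ (X i) w : ℝ)) ≤ (Real.sqrt 2)⁻¹ := by
  have h2 : (0:ℝ) < Real.sqrt 2 := by positivity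
  have hne : Nonempty (Fin n) := ⟨⟨0, by omega⟩⟩
  have h0l : (⟨0, by omega⟩ : Fin d) ≠ l := by
    intro h
    apply hl
    rw [← h]
  have e0 : ∀ (w : EuclideanSpace ℝ (Fin d)) (i : Fin n), (i : ℕ) = 0 →
      (inner ℝ (X i) w : ℝ) = (Real.sqrt 2)⁻¹ * (w l - w ⟨0, by omega⟩) := by
    intro w i hi
    rw [hX1 i hi]
    simp [inner_add_left, inner_neg_left, real_inner_smul_left,
      EuclideanSpace.inner_single_left]
    ring
  have e1 : ∀ (w : EuclideanSpace ℝ (Fin d)) (i : Fin n), (i : ℕ) ≠ 0 →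
      (inner ℝ (X i) w : ℝ) = (Real.sqrt 2)⁻¹ * (w ⟨0, by omega⟩ + w l) := by
    intro w i hi
    rw [hXi i hi]
    simp [inner_add_left, real_inner_smul_left, EuclideanSpace.inner_single_left]
    ring
  have hsingle : ∀ i : Fin n,
      (inner ℝ (X i) (EuclideanSpace.single l (1 : ℝ)) : ℝ) = (Real.sqrt 2)⁻¹ := by
    intro i
    have hs0 : (EuclideanSpace.single l (1 : ℝ)) (⟨0, by omega⟩ : Fin d) = 0 := by
      rw [EuclideanSpace.single_apply, if_neg h0l]
    have hsl : (EuclideanSpace.single l (1 : ℝ)) l = 1 := by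
      rw [EuclideanSpace.single_apply]; simp
    by_cases h : (i : ℕ) = 0
    · rw [e0 _ i h, hs0, hsl]; ring
    · rw [e1 _ i h, hs0, hsl]; ring
  constructor
  · simp_rw [hsingle]
    exact ciInf_const
  · intro w hw
    have hbdd : BddBelow (Set.range fun i : Fin n => (inner ℝ (X i) w : ℝ)) :=
      (Set.finite_range _).bddBelow
    have hwl : w l ≤ 1 := by
      have h1 : (inner ℝ (EuclideanSpace.single l (1 : ℝ)) w : ℝ) = w l := by
        rw [EuclideanSpace.inner_single_left]; simp
      have h2' := abs_real_inner_le_norm (EuclideanSpace.single l (1 : ℝ)) w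
      rw [h1, EuclideanSpace.norm_single] at h2'
      simp at h2'
      calc w l ≤ |w l| := le_abs_self _
        _ ≤ ‖w‖ := h2'
        _ ≤ 1 := hw
    rcases le_total (w (⟨0, by omega⟩ : Fin d)) 0 with h | h
    · have i1 : Fin n := ⟨1, by omega⟩
      calc (⨅ i : Fin n, (inner ℝ (X i) w : ℝ))
          ≤ (inner ℝ (X (⟨1, by omega⟩ : Fin n)) w : ℝ) := ciInf_le hbdd _
        _ = (Real.sqrt 2)⁻¹ * (w ⟨0, by omega⟩ + w l) := e1 w _ (by simp)
        _ ≤ (Real.sqrt 2)⁻¹ * 1 := by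
            apply mul_le_mul_of_nonneg_left _ (by positivity)
            linarith
        _ = (Real.sqrt 2)⁻¹ := mul_one _
    · calc (⨅ i : Fin n, (inner ℝ (X i) w : ℝ))
          ≤ (inner ℝ (X (⟨0, by omega⟩ : Fin n)) w : ℝ) := ciInf_le hbdd _
        _ = (Real.sqrt 2)⁻¹ * (w l - w ⟨0, by omega⟩) := e0 w _ rfl
        _ ≤ (Real.sqrt 2)⁻¹ * 1 := by
            apply mul_le_mul_of_nonneg_left _ (by positivity)
            linarith
        _ = (Real.sqrt 2)⁻¹ := mul_one _
end

section
/- Let $n \ge 3$, $d \ge 2$, $l \in \{2,\dots,d\}$, $k \in \{3,\dots,n\}$, and let $X \in \mathbb{R}^{n \times d}$ be the Case-1 matrix with rows $X_1 = -\tfrac{1}{\sqrt{2}} e_1 + \tfrac{1}{\sqrt{2}} e_l$, $X_k = e_1$, and $X_i = \tfrac{1}{\sqrt{2}} e_1 + \tfrac{1}{\sqrt{2}} e_l$ for all $i \in \{2,\dots,n\} \setminus \{k\}$. Then $\sup_{w \in \mathbb{B}_d} \min_{i \in \{1,\dots,n\}} \langle X_i, w \rangle = \tfrac{1}{\sqrt{4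 + 2\sqrt{2}}}$, and the supremum is attained at $w = \tfrac{1}{\sqrt{4+2\sqrt{2}}} e_1 + \tfrac{\sqrt{2}+1}{\sqrt{4+2\sqrt{2}}} e_l$. -/
/-- The maximin value of the Case-1 instance in the quantum lower bound for
linear classification is `1/√(4+2√2)`, attained at
`w = (1/√(4+2√2)) e₁ + ((√2+1)/√(4+2√2)) e_l`. -/
theorem case1_linear_classification_value (n d : ℕ) (hn : 3 ≤ n) (hd : 2 ≤ d)
    (l : Fin d) (hl : (l : ℕ) ≠ 0)
    (k : Fin n) (hk : 2 ≤ (k : ℕ))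
    (X : Fin n → EuclideanSpace ℝ (Fin d))
    (hX1 : ∀ i : Fin n, (i : ℕ) = 0 →
      X i = -((Real.sqrt 2)⁻¹ • EuclideanSpace.single (⟨0, by omega⟩ : Fin d) (1 : ℝ))
        + (Real.sqrt 2)⁻¹ • EuclideanSpace.single l (1 : ℝ))
    (hXk : X k = EuclideanSpace.single (⟨0, by omega⟩ : Fin d) (1 : ℝ))
    (hXi : ∀ i : Fin n, (i : ℕ) ≠ 0 → i ≠ k →
      X i = (Real.sqrt 2)⁻¹ • EuclideanSpace.single (⟨0, by omega⟩ : Fin d) (1 : ℝ)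
        + (Real.sqrt 2)⁻¹ • EuclideanSpace.single l (1 : ℝ)) :
    (⨅ i : Fin n, (inner ℝ (X i)
          ((Real.sqrt (4 + 2 * Real.sqrt 2))⁻¹
              • EuclideanSpace.single (⟨0, by omega⟩ : Fin d) (1 : ℝ)
            + ((Real.sqrt 2 + 1) / Real.sqrt (4 + 2 * Real.sqrt 2))
              • EuclideanSpace.single l (1 : ℝ)) : ℝ))
        = (Real.sqrt (4 + 2 * Real.sqrt 2))⁻¹
      ∧ ∀ w : EuclideanSpace ℝ (Fin d), ‖w‖ ≤ 1 →
        (⨅ i : Fin n, (inner ℝ (X i) w : ℝ)) ≤ (Real.sqrt (4 + 2 * Real.sqrt 2))⁻¹ := by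
  have _inst : Nonempty (Fin n) := ⟨⟨0, by omega⟩⟩
  set s := Real.sqrt 2 with hs
  have hs_pos : (0:ℝ) < s := Real.sqrt_pos.2 (by norm_num)
  have hs_sq : s ^ 2 = 2 := Real.sq_sqrt (by norm_num)
  set c := Real.sqrt (4 + 2 * s) with hc
  have hc_pos : (0:ℝ) < c := Real.sqrt_pos.2 (by positivity)
  have hc_sq : c ^ 2 = 4 + 2 * s := Real.sq_sqrt (by positivity)
  set z : Fin d := (⟨0, by omega⟩ : Fin d) with hz
  have hzl : z ≠ l := by
    intro h
    apply hl
    rw [← h]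
  set i0 : Fin n := (⟨0, by omega⟩ : Fin n) with hi0
  -- inner product formulas
  have h1 : ∀ w : EuclideanSpace ℝ (Fin d), ∀ i : Fin n, (i : ℕ) = 0 →
      (inner ℝ (X i) w : ℝ) = s⁻¹ * w l - s⁻¹ * w z := by
    intro w i hi
    rw [hX1 i hi]
    simp [inner_add_left, inner_neg_left, inner_smul_left, EuclideanSpace.inner_single_left]
    ring
  have hkk : ∀ w : EuclideanSpace ℝ (Fin d), (inner ℝ (X k) w : ℝ) = w z := by
    intro w
    rw [hXk]
    simp [EuclideanSpace.inner_single_left]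
  have h2 : ∀ w : EuclideanSpace ℝ (Fin d), ∀ i : Fin n, (i : ℕ) ≠ 0 → i ≠ k →
      (inner ℝ (X i) w : ℝ) = s⁻¹ * w z + s⁻¹ * w l := by
    intro w i hi hik
    rw [hXi i hi hik]
    simp [inner_add_left, inner_smul_left, EuclideanSpace.inner_single_left]
  -- the candidate vector
  set w0 : EuclideanSpace ℝ (Fin d) :=
    c⁻¹ • EuclideanSpace.single z (1:ℝ) + ((s+1)/c) • EuclideanSpace.single l 1 with hw0
  have hw0z : w0 z = c⁻¹ := by
    simp [hw0, EuclideanSpace.single_apply, if_neg hzl, hzl.symm]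
  have hw0l : w0 l = (s+1)/c := by
    simp [hw0, EuclideanSpace.single_apply, if_neg hzl.symm]
  constructor
  · apply le_antisymm
    · have := ciInf_le (Finite.bddBelow_range fun i => (inner ℝ (X i) w0 : ℝ)) i0
      refine this.trans_eq ?_
      rw [h1 w0 i0 rfl, hw0z, hw0l]
      field_simp
      ring
    · apply le_ciInf
      intro i
      by_cases hi : (i : ℕ) = 0
      · rw [h1 w0 i hi, hw0z, hw0l]
        have : s⁻¹ * ((s+1)/c) - s⁻¹ * c⁻¹ = c⁻¹ := by
          field_simp
          ring
        linarith [this.ge]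
      · by_cases hik : i = k
        · rw [hik, hkk w0, hw0z]
        · rw [h2 w0 i hi hik, hw0z, hw0l]
          have h3 : s⁻¹ * c⁻¹ + s⁻¹ * ((s+1)/c) = (s+1)/c := by
            field_simp
            nlinarith [hs_sq]
          rw [h3]
          rw [div_eq_mul_inv]
          nlinarith [mul_pos hs_pos (inv_pos.2 hc_pos), inv_pos.2 hc_pos]
  · intro w hw
    have hb : BddBelow (Set.range fun i => (inner ℝ (X i) w : ℝ)) :=
      Finite.bddBelow_range _
    have hA : (⨅ i : Fin n, (inner ℝ (X i) w : ℝ)) ≤ s⁻¹ * w l - s⁻¹ * w z := by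
      have := ciInf_le hb i0
      rwa [h1 w i0 rfl] at this
    have hB : (⨅ i : Fin n, (inner ℝ (X i) w : ℝ)) ≤ w z := by
      have := ciInf_le hb k
      rwa [hkk w] at this
    by_contra hcon
    push_neg at hcon
    have hu : c⁻¹ < w z := lt_of_lt_of_le hcon hB
    have hv : c⁻¹ < s⁻¹ * w l - s⁻¹ * w z := lt_of_lt_of_le hcon hA
    -- norm bound
    have hnorm : (w z) ^ 2 + (w l) ^ 2 ≤ 1 := by
      have h4 : (w z) ^ 2 + (w l) ^ 2 = ∑ j ∈ ({z, l} : Finset (Fin d)), (w j) ^ 2 := by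
        rw [Finset.sum_pair hzl]
      have h5 : ∑ j ∈ ({z, l} : Finset (Fin d)), (w j) ^ 2 ≤ ∑ j, (w j) ^ 2 :=
        Finset.sum_le_sum_of_subset_of_nonneg (Finset.subset_univ _)
          (fun i _ _ => sq_nonneg _)
      have h6 : ∑ j, (w j) ^ 2 = ‖w‖ ^ 2 := by
        rw [EuclideanSpace.norm_eq, Real.sq_sqrt (by positivity)]
        simp [Real.norm_eq_abs, sq_abs]
      have h7 : ‖w‖ ^ 2 ≤ 1 := by nlinarith [norm_nonneg w]
      linarith [h4 ▸ (h5.trans (h6 ▸ h7))]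
    have hsinv : s⁻¹ > 0 := inv_pos.2 hs_pos
    have hcinv : c⁻¹ > 0 := inv_pos.2 hc_pos
    have hvv : w l > (s+1) * c⁻¹ := by
      have : s * c⁻¹ < w l - w z := by
        have := mul_lt_mul_of_pos_left hv hs_pos
        rw [mul_sub, ← mul_assoc, ← mul_assoc, mul_inv_cancel₀ hs_pos.ne'] at this
        linarith
      have h8 : (s+1)*c⁻¹ = s*c⁻¹ + c⁻¹ := by ring
      linarith
    have hid : (c⁻¹)^2 + ((s+1)*c⁻¹)^2 = 1 := by
      have : (c⁻¹)^2 + ((s+1)*c⁻¹)^2 = (4 + 2*s) * (c⁻¹)^2 := by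
        have : (s+1)^2 = 3 + 2*s := by linear_combination hs_sq
        rw [mul_pow, this]
        ring
      rw [this, ← hc_sq]
      field_simp
    have hu2 : (c⁻¹)^2 < (w z)^2 := by
      exact pow_lt_pow_left₀ hu hcinv.le (by norm_num)
    have hv2 : ((s+1)*c⁻¹)^2 < (w l)^2 := by
      exact pow_lt_pow_left₀ hvv (by positivity) (by norm_num)
    linarith
end
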